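/- Let V(k) = Θ̃(k)^T Θ̃(k) with Θ̃(k+1) = (I - ηU(k) - ηS)Θ̃(k), where U(k), S are symmetric positive semidefinite, S is positive definite, and η = λ_min(S)/(λ_max(U(k)) + λ_max(S))². Then V(k+1) - V(k) ≤ -[λ_min(S)²/(λ_max(U(k)) + λ_max(S))²] ‖Θ̃(k)‖². -/

import Mathlib

open Matrix

/-- Largest eigenvalue of a hermitian real matrix. -/
noncomputable def eigMax {n : ℕ} (A : Matrix (Fin n) (Fin n) ℝ)
    (hA : A.IsHermitian) : ℝ := ⨆ i, hA.eigenvalues i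

/-- Smallest eigenvalue of a hermitian real matrix. -/
noncomputable def eigMin {n : ℕ} (A : Matrix (Fin n) (Fin n) ℝ)
    (hA : A.IsHermitian) : ℝ := ⨅ i, hA.eigenvalues i

/-! With `T = U(k) + S` the update reads `Θ⁺ = Θ - η T Θ`, so
`‖Θ⁺‖² = ‖Θ‖² - 2η⟪Θ, TΘ⟫ + η²‖TΘ‖²`. Every eigenvalue of `T` lies in `[0, L]`,
`L = λ_max(U) + λ_max(S)` (bound the Rayleigh quotients of `U` and `S` at the eigenvectors
of `T`), hence `‖TΘ‖² ≤ L⟪Θ, TΘ⟫`. Since `ηL = λ_min(S)/L ≤ 1` the quadratic term is absorbed: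
`‖Θ⁺‖² - ‖Θ‖² ≤ -η⟪Θ, TΘ⟫ ≤ -η λ_min(S) ‖Θ‖² = -(λ_min(S)²/L²) ‖Θ‖²`. -/

open RealInnerProductSpace

namespace Matrix.IsHermitian

variable {ι : Type*} [Fintype ι] [DecidableEq ι] {A : Matrix ι ι ℝ} (hA : A.IsHermitian)
include hA

lemma toEuclideanLin_eigenvectorBasis (i : ι) :
    toEuclideanLin A (hA.eigenvectorBasis i) = hA.eigenvalues i • hA.eigenvectorBasis i := by
  rw [toLpLin_apply, hA.mulVec_eigenvectorBasis, WithLp.toLp_smul, WithLp.toLp_ofLp]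

lemma inner_eigenvectorBasis_toEuclideanLin (i : ι) (x : EuclideanSpace ℝ ι) :
    ⟪hA.eigenvectorBasis i, toEuclideanLin A x⟫ =
      hA.eigenvalues i * ⟪hA.eigenvectorBasis i, x⟫ := by
  rw [← isSymmetric_toEuclideanLin_iff.2 hA, toEuclideanLin_eigenvectorBasis,
    real_inner_smul_left]

lemma eigenvalues_eq_inner (i : ι) :
    hA.eigenvalues i = ⟪hA.eigenvectorBasis i, toEuclideanLin A (hA.eigenvectorBasis i)⟫ := by
  rw [inner_eigenvectorBasis_toEuclideanLin, real_inner_self_eq_norm_sq,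
    hA.eigenvectorBasis.orthonormal.1 i, one_pow, mul_one]

lemma inner_toEuclideanLin_self_eq_sum (x : EuclideanSpace ℝ ι) :
    ⟪x, toEuclideanLin A x⟫ = ∑ i, hA.eigenvalues i * ⟪hA.eigenvectorBasis i, x⟫ ^ 2 := by
  rw [← hA.eigenvectorBasis.sum_inner_mul_inner]
  refine Finset.sum_congr rfl fun i _ => ?_
  rw [inner_eigenvectorBasis_toEuclideanLin, real_inner_comm x]
  ring

lemma norm_toEuclideanLin_sq_eq_sum (x : EuclideanSpace ℝ ι) :
    ‖toEuclideanLin A x‖ ^ 2 = ∑ i, hA.eigenvalues i ^ 2 * ⟪hA.eigenvectorBasis i, x⟫ ^ 2 := by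
  rw [← hA.eigenvectorBasis.sum_sq_inner_right]
  simp only [inner_eigenvectorBasis_toEuclideanLin, mul_pow]

lemma inner_toEuclideanLin_self_le {c : ℝ} (hc : ∀ i, hA.eigenvalues i ≤ c)
    (x : EuclideanSpace ℝ ι) : ⟪x, toEuclideanLin A x⟫ ≤ c * ‖x‖ ^ 2 := by
  rw [hA.inner_toEuclideanLin_self_eq_sum, ← hA.eigenvectorBasis.sum_sq_inner_right,
    Finset.mul_sum]
  gcongr with i
  exact hc i

lemma le_inner_toEuclideanLin_self {c : ℝ} (hc : ∀ i, c ≤ hA.eigenvalues i)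
    (x : EuclideanSpace ℝ ι) : c * ‖x‖ ^ 2 ≤ ⟪x, toEuclideanLin A x⟫ := by
  rw [hA.inner_toEuclideanLin_self_eq_sum, ← hA.eigenvectorBasis.sum_sq_inner_right,
    Finset.mul_sum]
  gcongr with i
  exact hc i

lemma norm_toEuclideanLin_sq_le {c : ℝ} (h0 : ∀ i, 0 ≤ hA.eigenvalues i)
    (hc : ∀ i, hA.eigenvalues i ≤ c) (x : EuclideanSpace ℝ ι) :
    ‖toEuclideanLin A x‖ ^ 2 ≤ c * ⟪x, toEuclideanLin A x⟫ := by
  rw [hA.norm_toEuclideanLin_sq_eq_sum, hA.inner_toEuclideanLin_self_eq_sum, Finset.mul_sum]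
  refine Finset.sum_le_sum fun i _ => ?_
  rw [← mul_assoc, pow_two (hA.eigenvalues i)]
  exact mul_le_mul_of_nonneg_right (mul_le_mul_of_nonneg_right (hc i) (h0 i)) (sq_nonneg _)

end Matrix.IsHermitian

section eigMinMax

variable {n : ℕ} {A : Matrix (Fin n) (Fin n) ℝ}

lemma eigenvalues_le_eigMax (hA : A.IsHermitian) (i : Fin n) : hA.eigenvalues i ≤ eigMax A hA :=
  le_ciSup (Set.finite_range _).bddAbove i

lemma eigMin_le_eigenvalues (hA : A.IsHermitian) (i : Fin n) : eigMin A hA ≤ hA.eigenvalues i :=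
  ciInf_le (Set.finite_range _).bddBelow i

lemma eigMin_le_eigMax (hA : A.IsHermitian) : eigMin A hA ≤ eigMax A hA := by
  rcases isEmpty_or_nonempty (Fin n) with _ | ⟨⟨i⟩⟩
  · simp [eigMin, eigMax]
  · exact (eigMin_le_eigenvalues hA i).trans (eigenvalues_le_eigMax hA i)

lemma Matrix.PosSemidef.eigMin_nonneg (hA : A.PosSemidef) : 0 ≤ eigMin A hA.1 :=
  Real.iInf_nonneg hA.eigenvalues_nonneg

lemma Matrix.PosSemidef.eigMax_nonneg (hA : A.PosSemidef) : 0 ≤ eigMax A hA.1 :=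
  Real.iSup_nonneg hA.eigenvalues_nonneg

lemma eigenvalues_add_le_eigMax_add_eigMax {B : Matrix (Fin n) (Fin n) ℝ} (hA : A.IsHermitian)
    (hB : B.IsHermitian) (hAB : (A + B).IsHermitian) (i : Fin n) :
    hAB.eigenvalues i ≤ eigMax A hA + eigMax B hB := by
  have hv : ‖hAB.eigenvectorBasis i‖ = 1 := hAB.eigenvectorBasis.orthonormal.1 i
  rw [hAB.eigenvalues_eq_inner, map_add, LinearMap.add_apply, inner_add_right]
  have hA' := hA.inner_toEuclideanLin_self_le (eigenvalues_le_eigMax hA) (hAB.eigenvectorBasis i)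
  have hB' := hB.inner_toEuclideanLin_self_le (eigenvalues_le_eigMax hB) (hAB.eigenvectorBasis i)
  rw [hv, one_pow, mul_one] at hA' hB'
  exact add_le_add hA' hB'

end eigMinMax

lemma norm_sub_smul_sq_le {E : Type*} [NormedAddCommGroup E] [InnerProductSpace ℝ E]
    {x y : E} {m L η : ℝ} (hm0 : 0 ≤ m) (hm : m * ‖x‖ ^ 2 ≤ ⟪x, y⟫) (hL : ‖y‖ ^ 2 ≤ L * ⟪x, y⟫)
    (hη : 0 ≤ η) (hηL : η * L ≤ 1) : ‖x - η • y‖ ^ 2 ≤ (1 - η * m) * ‖x‖ ^ 2 := by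
  have ht : 0 ≤ ⟪x, y⟫ := (by positivity : 0 ≤ m * ‖x‖ ^ 2).trans hm
  have hsq : η ^ 2 * ‖y‖ ^ 2 ≤ η * ⟪x, y⟫ := calc
    η ^ 2 * ‖y‖ ^ 2 ≤ η ^ 2 * (L * ⟪x, y⟫) := by gcongr
    _ = (η * L) * (η * ⟪x, y⟫) := by ring
    _ ≤ η * ⟪x, y⟫ := mul_le_of_le_one_left (mul_nonneg hη ht) hηL
  calc ‖x - η • y‖ ^ 2 = ‖x‖ ^ 2 - 2 * η * ⟪x, y⟫ + η ^ 2 * ‖y‖ ^ 2 := by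
        rw [norm_sub_sq_real, real_inner_smul_right, norm_smul, mul_pow, Real.norm_eq_abs,
          sq_abs]
        ring
    _ ≤ ‖x‖ ^ 2 - η * (m * ‖x‖ ^ 2) := by nlinarith [mul_le_mul_of_nonneg_left hm hη]
    _ = (1 - η * m) * ‖x‖ ^ 2 := by ring

lemma toEuclideanLin_one_sub_smul_sub_smul {ι : Type*} [Fintype ι] [DecidableEq ι]
    (U S : Matrix ι ι ℝ) (η : ℝ) (x : EuclideanSpace ℝ ι) :
    toEuclideanLin (1 - η • U - η • S) x = x - η • toEuclideanLin (U + S) x := by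
  rw [sub_sub, ← smul_add]
  simp

/-- Lyapunov decrease of the concurrent-learning error. For
`V(k) = Θ̃(k)ᵀΘ̃(k)` and `Θ̃(k+1) = (I − ηU(k) − ηS) Θ̃(k)` with `U(k)`, `S`
symmetric PSD, `S` positive definite, and
`η = λ_min(S) / (λ_max(U(k)) + λ_max(S))²`, one has
`V(k+1) − V(k) ≤ −(λ_min(S)² / (λ_max(U(k)) + λ_max(S))²) ‖Θ̃(k)‖²`. -/
theorem stmt2 {n : ℕ}
    (U : ℕ → Matrix (Fin n) (Fin n) ℝ) (hU : ∀ k, (U k).PosSemidef)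
    (S : Matrix (Fin n) (Fin n) ℝ) (hS : S.PosDef)
    (η : ℕ → ℝ)
    (hη : ∀ k, η k = eigMin S hS.1 / (eigMax (U k) (hU k).1 + eigMax S hS.1) ^ 2)
    (Θ : ℕ → EuclideanSpace ℝ (Fin n))
    (hrec : ∀ k, Θ (k + 1) = Matrix.toEuclideanLin (1 - η k • U k - η k • S) (Θ k))
    (V : ℕ → ℝ) (hV : ∀ k, V k = ‖Θ k‖ ^ 2) :
    ∀ k, V (k + 1) - V k ≤
      -(eigMin S hS.1 ^ 2 / (eigMax (U k) (hU k).1 + eigMax S hS.1) ^ 2) * ‖Θ k‖ ^ 2 := by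
  intro k
  set m := eigMin S hS.1
  set L := eigMax (U k) (hU k).1 + eigMax S hS.1
  have hT : (U k + S).PosSemidef := (hU k).add hS.posSemidef
  have hm0 : 0 ≤ m := hS.posSemidef.eigMin_nonneg
  have hmL : m ≤ L := by
    linarith [eigMin_le_eigMax hS.1, (hU k).eigMax_nonneg]
  have hηL : η k * L ≤ 1 := calc
    η k * L = m * L / L ^ 2 := by rw [hη k]; ring
    _ ≤ L * L / L ^ 2 := by gcongr; linarith
    _ ≤ 1 := by rw [← sq]; exact div_self_le_one _
  have hlower : m * ‖Θ k‖ ^ 2 ≤ ⟪Θ k, toEuclideanLin (U k + S) (Θ k)⟫ := by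
    rw [map_add, LinearMap.add_apply, inner_add_right]
    linarith [(hU k).1.le_inner_toEuclideanLin_self (hU k).eigenvalues_nonneg (Θ k),
      hS.1.le_inner_toEuclideanLin_self (eigMin_le_eigenvalues hS.1) (Θ k)]
  have hupper := hT.1.norm_toEuclideanLin_sq_le hT.eigenvalues_nonneg
    (eigenvalues_add_le_eigMax_add_eigMax (hU k).1 hS.1 hT.1) (Θ k)
  have hdescent := norm_sub_smul_sq_le hm0 hlower hupper (by rw [hη k]; positivity) hηL
  rw [hV, hV, hrec, toEuclideanLin_one_sub_smul_sub_smul]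
  calc _ ≤ (1 - η k * m) * ‖Θ k‖ ^ 2 - ‖Θ k‖ ^ 2 := by gcongr
    _ = _ := by rw [hη k]; ring
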